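/- The matrix S·R·S·R²·S belongs to U₁ but does not belong to V₁; in particular U₁ ≠ V₁. -/

import Mathlib

open Matrix

/-- `SL(2,ℤ)`, the group of 2×2 integer matrices of determinant 1. -/
abbrev SL2Z := Matrix.SpecialLinearGroup (Fin 2) ℤ

/-- The matrix `S = [[0,-1],[1,0]]` in `SL(2,ℤ)`. -/
def Smat : SL2Z := ⟨!![0, -1; 1, 0], by norm_num [Matrix.det_fin_two_of]⟩

/-- The matrix `R = ST = [[0,-1],[1,1]]` in `SL(2,ℤ)`. -/
def Rmat : SL2Z := ⟨!![0, -1; 1, 1], by norm_num [Matrix.det_fin_two_of]⟩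

/-- The subgroup `U₁` of `SL(2,ℤ)`. -/
def U1 : Subgroup SL2Z :=
  Subgroup.closure
    { (⟨!![1, 6; 0, 1], by norm_num [Matrix.det_fin_two_of]⟩ : SL2Z),
      ⟨!![1, -2; 1, -1], by norm_num [Matrix.det_fin_two_of]⟩,
      ⟨!![0, -1; 1, 1], by norm_num [Matrix.det_fin_two_of]⟩ }

/-- The subgroup `V₁` of `SL(2,ℤ)`. -/
def V1 : Subgroup SL2Z :=
  Subgroup.closure
    { (⟨!![1, 6; 0, 1], by norm_num [Matrix.det_fin_two_of]⟩ : SL2Z),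
      ⟨!![4, -17; 1, -4], by norm_num [Matrix.det_fin_two_of]⟩,
      ⟨!![0, -1; 1, 1], by norm_num [Matrix.det_fin_two_of]⟩ }

/-!
The images of `S` and `R` in `PSL(2,ℤ)` generate a free product `C₂ * C₃`: this is ping-pong on the
upper half-plane, where `z ↦ -1/z` maps `{Re z < 0}` into `{Re z > 0}` while `R` and `R²` map
`{Re z > 0}` into `{Re z < 0}`. So a word in `S` and `R` is determined by the Möbius map it
represents, and any pair `σ, ρ` with `σ² = ρ³ = 1` in a group lets us evaluate that word there.
With `σ = (0 1)(2 3)(4 5)` and `ρ = (1 6 2)(3 5 4)` on seven points, the words for the generators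
of `V₁` fix `0`, hence so do the words of all elements of `V₁`, whereas `S·R·S·R²·S` (a generator
of `U₁`) sends `0` to `4`.
-/

open ModularGroup UpperHalfPlane
open scoped Pointwise MatrixGroups

section

variable {G : Type*} [Group G]

def zmodPowersHom {n : ℕ} (g : G) (hg : g ^ n = 1) : Multiplicative (ZMod n) →* G :=
  AddMonoidHom.toMultiplicativeLeft <|
    ZMod.lift n ⟨zmultiplesHom (Additive G) (Additive.ofMul g), by simp [← ofMul_pow, hg]⟩

lemma zmodPowersHom_ofAdd_natCast {n : ℕ} (g : G) (hg : g ^ n = 1) (k : ℕ) :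
    zmodPowersHom g hg (Multiplicative.ofAdd (k : ZMod n)) = g ^ k := by
  simp only [zmodPowersHom, AddMonoidHom.coe_toMultiplicativeLeft, Function.comp_apply,
    toAdd_ofAdd]
  rw [← Int.cast_natCast (R := ZMod n) k, ZMod.lift_coe]
  simp

end

def C2C3Factor : Bool → Type
  | false => Multiplicative (ZMod 2)
  | true => Multiplicative (ZMod 3)

instance : ∀ b, Group (C2C3Factor b)
  | false => inferInstanceAs (Group (Multiplicative (ZMod 2)))
  | true => inferInstanceAs (Group (Multiplicative (ZMod 3)))

abbrev C2C3 := Monoid.CoprodI C2C3Factor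

namespace C2C3

def s : C2C3 := Monoid.CoprodI.of (i := false) (Multiplicative.ofAdd (1 : ZMod 2))

def r : C2C3 := Monoid.CoprodI.of (i := true) (Multiplicative.ofAdd (1 : ZMod 3))

section Lift

variable {G : Type*} [Group G] (a b : G) (ha : a ^ 2 = 1) (hb : b ^ 3 = 1)

def liftFactor : ∀ i, C2C3Factor i →* G
  | false => zmodPowersHom a ha
  | true => zmodPowersHom b hb

def lift : C2C3 →* G := Monoid.CoprodI.lift (liftFactor a b ha hb)

@[simp]
lemma lift_s : lift a b ha hb s = a := by
  erw [lift, Monoid.CoprodI.lift_of]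
  show zmodPowersHom a ha (.ofAdd 1) = a
  simpa using zmodPowersHom_ofAdd_natCast a ha 1

@[simp]
lemma lift_r : lift a b ha hb r = b := by
  erw [lift, Monoid.CoprodI.lift_of]
  show zmodPowersHom b hb (.ofAdd 1) = b
  simpa using zmodPowersHom_ofAdd_natCast b hb 1

theorem lift_injective_of_ping_pong {α : Type*} [MulAction G α] {X Y : Set α}
    (hX : X.Nonempty) (hY : Y.Nonempty) (hXY : Disjoint X Y)
    (haYX : a • Y ⊆ X) (hbXY : b • X ⊆ Y) (hb2XY : b ^ 2 • X ⊆ Y) :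
    Function.Injective (lift a b ha hb) := by
  refine Monoid.CoprodI.lift_injective_of_ping_pong _ ?_ (fun i => cond i Y X)
    (by rintro (_ | _) <;> assumption) ?_ ?_
  · exact Or.inr ⟨true, by simp [C2C3Factor, Cardinal.mk_fintype]⟩
  · rintro (_ | _) (_ | _) hij
    exacts [(hij rfl).elim, hXY, hXY.symm, (hij rfl).elim]
  · rintro (_ | _) (_ | _) hij h hh
    · exact (hij rfl).elim
    · have hC2 : ∀ h : Multiplicative (ZMod 2), h ≠ 1 → h = .ofAdd ((1 : ℕ) : ZMod 2) := by
        decide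
      show zmodPowersHom a ha h • Y ⊆ X
      rwa [hC2 h hh, zmodPowersHom_ofAdd_natCast, pow_one]
    · have hC3 : ∀ h : Multiplicative (ZMod 3), h ≠ 1 →
          h = .ofAdd ((1 : ℕ) : ZMod 3) ∨ h = .ofAdd ((2 : ℕ) : ZMod 3) := by
        decide
      show zmodPowersHom b hb h • X ⊆ Y
      rcases hC3 h hh with rfl | rfl <;> rw [zmodPowersHom_ofAdd_natCast]
      exacts [(pow_one b).symm ▸ hbXY, hb2XY]
    · exact (hij rfl).elim

end Lift

end C2C3

namespace ModularGroup

lemma re_S_smul (z : ℍ) : (S • z).re = -z.re / Complex.normSq z := by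
  rw [modular_S_smul, ← coe_re, coe_mk, Complex.inv_re, Complex.normSq_neg, Complex.neg_re, coe_re]

lemma re_S_smul_pos_of_re_neg {z : ℍ} (hz : z.re < 0) : 0 < (S • z).re := by
  rw [re_S_smul]
  exact div_pos (neg_pos.mpr hz) z.normSq_pos

lemma re_S_smul_neg_of_re_pos {z : ℍ} (hz : 0 < z.re) : (S • z).re < 0 := by
  rw [re_S_smul]
  exact div_neg_of_neg_of_pos (neg_neg_of_pos hz) z.normSq_pos

end ModularGroup

noncomputable abbrev moebiusPerm : SL(2, ℤ) →* Equiv.Perm ℍ := MulAction.toPermHom SL(2, ℤ) ℍ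

lemma moebiusPerm_neg (g : SL(2, ℤ)) : moebiusPerm (-g) = moebiusPerm g :=
  Equiv.ext (SL_neg_smul g)

lemma moebiusPerm_Smat_sq : moebiusPerm Smat ^ 2 = 1 := by
  rw [← map_pow, show Smat ^ 2 = -1 by decide, moebiusPerm_neg, map_one]

lemma moebiusPerm_Rmat_cube : moebiusPerm Rmat ^ 3 = 1 := by
  rw [← map_pow, show Rmat ^ 3 = -1 by decide, moebiusPerm_neg, map_one]

def sperm : Equiv.Perm (Fin 7) :=
  ⟨![1, 0, 3, 2, 5, 4, 6], ![1, 0, 3, 2, 5, 4, 6], by decide, by decide⟩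

def rperm : Equiv.Perm (Fin 7) :=
  ⟨![0, 6, 1, 5, 3, 4, 2], ![0, 2, 6, 4, 5, 3, 1], by decide, by decide⟩

namespace C2C3

noncomputable def toMoebius : C2C3 →* Equiv.Perm ℍ :=
  lift _ _ moebiusPerm_Smat_sq moebiusPerm_Rmat_cube

@[simp]
lemma toMoebius_s : toMoebius s = moebiusPerm Smat := lift_s ..

@[simp]
lemma toMoebius_r : toMoebius r = moebiusPerm Rmat := lift_r ..

theorem toMoebius_injective : Function.Injective toMoebius := by
  have hS : Smat = S := rfl
  have hR : Rmat = S * T := by decide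
  have hR2 : Rmat ^ 2 = T⁻¹ * S := by decide
  refine lift_injective_of_ping_pong _ _ _ _ (X := {z : ℍ | 0 < z.re}) (Y := {z | z.re < 0})
    ⟨(1 : ℝ) +ᵥ I, by simp⟩ ⟨(-1 : ℝ) +ᵥ I, by simp⟩
    (Set.disjoint_left.mpr fun z hX hY => (lt_asymm (α := ℝ) hX hY).elim) ?_ ?_ ?_ <;>
    rintro _ ⟨z, hz, rfl⟩ <;> rw [Set.mem_ofPred_eq] at hz ⊢
  · exact hS ▸ re_S_smul_pos_of_re_neg hz
  · show (Rmat • z).re < 0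
    rw [hR, mul_smul]
    exact re_S_smul_neg_of_re_pos (by rw [re_T_smul]; linarith)
  · rw [← map_pow]
    show ((Rmat ^ 2) • z).re < 0
    rw [hR2, mul_smul, re_T_inv_smul]
    linarith [re_S_smul_neg_of_re_pos hz]

def toPermFin7 : C2C3 →* Equiv.Perm (Fin 7) := lift sperm rperm (by decide) (by decide)

@[simp]
lemma toPermFin7_s : toPermFin7 s = sperm := lift_s ..

@[simp]
lemma toPermFin7_r : toPermFin7 r = rperm := lift_r ..

def t : C2C3 := s⁻¹ * r

lemma toMoebius_t : toMoebius t = moebiusPerm T := by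
  rw [t, map_mul, map_inv, toMoebius_s, toMoebius_r, ← map_inv, ← map_mul]
  exact congrArg moebiusPerm (by decide)

end C2C3

open C2C3

noncomputable def sevenPointStabilizer : Subgroup SL(2, ℤ) :=
  (((MulAction.stabilizer (Equiv.Perm (Fin 7)) (0 : Fin 7)).comap toPermFin7).map
    toMoebius).comap moebiusPerm

lemma mem_sevenPointStabilizer_of_word {g : SL(2, ℤ)} (w : C2C3) (hw : toPermFin7 w 0 = 0)
    (hwg : toMoebius w = moebiusPerm g) : g ∈ sevenPointStabilizer :=
  ⟨w, hw, hwg⟩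

lemma V1_le_sevenPointStabilizer : V1 ≤ sevenPointStabilizer := by
  rw [V1, Subgroup.closure_le]
  rintro g (rfl | rfl | rfl)
  · refine mem_sevenPointStabilizer_of_word (t ^ 6) ?_ ?_
    · simp only [t, map_pow, map_mul, map_inv, toPermFin7_s, toPermFin7_r]
      decide
    · rw [map_pow, toMoebius_t, ← map_pow]
      exact congrArg moebiusPerm (Subtype.ext (by decide))
  -- `[[4,-17],[1,-4]] = T⁴ S T⁻⁴`
  · refine mem_sevenPointStabilizer_of_word (t ^ 4 * s * (t ^ 4)⁻¹) ?_ ?_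
    · simp only [t, map_pow, map_mul, map_inv, toPermFin7_s, toPermFin7_r]
      decide
    · rw [map_mul, map_mul, map_inv, map_pow, toMoebius_t, toMoebius_s, ← map_pow, ← map_inv,
        ← map_mul, ← map_mul]
      exact congrArg moebiusPerm (Subtype.ext (by decide))
  · exact mem_sevenPointStabilizer_of_word r (by rw [toPermFin7_r]; decide) toMoebius_r

lemma SRSRRS_not_mem_sevenPointStabilizer :
    Smat * Rmat * Smat * Rmat ^ 2 * Smat ∉ sevenPointStabilizer := by
  rintro ⟨w, hw, hwM⟩
  obtain rfl : w = s * r * s * r ^ 2 * s :=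
    toMoebius_injective (by rw [hwM]; simp only [map_mul, map_pow, toMoebius_s, toMoebius_r])
  revert hw
  simp only [SetLike.mem_coe, Subgroup.mem_comap, MulAction.mem_stabilizer_iff, map_mul, map_pow,
    toPermFin7_s, toPermFin7_r]
  decide

/-- `S·R·S·R²·S` belongs to `U₁` but not to `V₁`; in particular `U₁ ≠ V₁`. -/
theorem SRSRRS_separates_U1_V1 :
    Smat * Rmat * Smat * Rmat ^ 2 * Smat ∈ U1 ∧
      Smat * Rmat * Smat * Rmat ^ 2 * Smat ∉ V1 ∧ U1 ≠ V1 := by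
  have hmem : Smat * Rmat * Smat * Rmat ^ 2 * Smat ∈ U1 :=
    Subgroup.subset_closure (Or.inr (Or.inl (Subtype.ext (by decide))))
  have hnot : Smat * Rmat * Smat * Rmat ^ 2 * Smat ∉ V1 := fun h =>
    SRSRRS_not_mem_sevenPointStabilizer (V1_le_sevenPointStabilizer h)
  exact ⟨hmem, hnot, fun h => hnot (h ▸ hmem)⟩
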